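/- Let H₁ ∈ ℝ^{d₁×d₁} and H₂ ∈ ℝ^{d₂×d₂} be symmetric matrices, and suppose the average traces satisfy (1/d₁)Tr(H₁) ≤ (1/d₂)Tr(H₂). If Δ₁ and Δ₂ are random vectors with E[Δ₁ Δ₁ᵀ] = (σ²/d₁) I and E[Δ₂ Δ₂ᵀ] = (σ²/d₂) I for the same σ ≥ 0, then E[½ Δ₁ᵀ H₁ Δ₁] ≤ E[½ Δ₂ᵀ H₂ Δ₂]. -/

import Mathlib

open MeasureTheory

/-! Since `Δᵀ H Δ = tr (H Δ Δᵀ)`, linearity of the integral gives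
`E[Δᵀ H Δ] = tr (H E[Δ Δᵀ])`, which for the isotropic second moment `(σ² / d) • 1` is
`(σ² / d) tr H`; the claim is then the trace hypothesis scaled by `σ² / 2`. -/

namespace Matrix

variable {Ω n : Type*} [MeasurableSpace Ω] [Fintype n] {μ : Measure Ω}

noncomputable def secondMoment (μ : Measure Ω) (Δ : Ω → n → ℝ) : Matrix n n ℝ :=
  of fun i j => ∫ ω, Δ ω i * Δ ω j ∂μ

theorem dotProduct_mulVec_self_eq_sum (H : Matrix n n ℝ) (x : n → ℝ) :
    x ⬝ᵥ H *ᵥ x = ∑ i, ∑ j, H i j * (x j * x i) := by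
  simp only [dotProduct, mulVec, Finset.mul_sum]
  exact Finset.sum_congr rfl fun i _ => Finset.sum_congr rfl fun j _ => by ring

theorem integral_dotProduct_mulVec_self (H : Matrix n n ℝ) (Δ : Ω → n → ℝ)
    (hint : ∀ i j, Integrable (fun ω => Δ ω i * Δ ω j) μ) :
    ∫ ω, Δ ω ⬝ᵥ H *ᵥ Δ ω ∂μ = (H * secondMoment μ Δ).trace := by
  calc ∫ ω, Δ ω ⬝ᵥ H *ᵥ Δ ω ∂μ
      = ∫ ω, ∑ i, ∑ j, H i j * (Δ ω j * Δ ω i) ∂μ := by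
        simp only [dotProduct_mulVec_self_eq_sum]
    _ = ∑ i, ∑ j, H i j * ∫ ω, Δ ω j * Δ ω i ∂μ := by
        rw [integral_finsetSum _ fun i _ =>
          integrable_finsetSum _ fun j _ => (hint j i).const_mul (H i j)]
        refine Finset.sum_congr rfl fun i _ => ?_
        rw [integral_finsetSum _ fun j _ => (hint j i).const_mul (H i j)]
        exact Finset.sum_congr rfl fun j _ => integral_const_mul _ _
    _ = (H * secondMoment μ Δ).trace := rfl

theorem integral_dotProduct_mulVec_self_of_secondMoment_eq_smul_one [DecidableEq n]
    (H : Matrix n n ℝ) (Δ : Ω → n → ℝ) (hint : ∀ i j, Integrable (fun ω => Δ ω i * Δ ω j) μ)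
    {c : ℝ}
    (hmom : secondMoment μ Δ = c • 1) :
    ∫ ω, Δ ω ⬝ᵥ H *ᵥ Δ ω ∂μ = c * H.trace := by
  rw [integral_dotProduct_mulVec_self H Δ hint, hmom, Matrix.mul_smul, Matrix.mul_one, trace_smul,
    smul_eq_mul]

end Matrix

open Matrix in
theorem dhf_stmt1_general {Ω₁ Ω₂ : Type*} [MeasurableSpace Ω₁] [MeasurableSpace Ω₂]
    {μ₁ : Measure Ω₁} {μ₂ : Measure Ω₂}
    {d₁ d₂ : ℕ}
    (H₁ : Matrix (Fin d₁) (Fin d₁) ℝ) (H₂ : Matrix (Fin d₂) (Fin d₂) ℝ)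
    (htr : (1 / (d₁ : ℝ)) * H₁.trace ≤ (1 / (d₂ : ℝ)) * H₂.trace)
    (Δ₁ : Ω₁ → Fin d₁ → ℝ) (Δ₂ : Ω₂ → Fin d₂ → ℝ) (σ : ℝ)
    (hint₁ : ∀ i j, Integrable (fun ω => Δ₁ ω i * Δ₁ ω j) μ₁)
    (hint₂ : ∀ i j, Integrable (fun ω => Δ₂ ω i * Δ₂ ω j) μ₂)
    (hmom₁ : (Matrix.of fun i j => ∫ ω, Δ₁ ω i * Δ₁ ω j ∂μ₁)
      = (σ ^ 2 / (d₁ : ℝ)) • (1 : Matrix (Fin d₁) (Fin d₁) ℝ))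
    (hmom₂ : (Matrix.of fun i j => ∫ ω, Δ₂ ω i * Δ₂ ω j ∂μ₂)
      = (σ ^ 2 / (d₂ : ℝ)) • (1 : Matrix (Fin d₂) (Fin d₂) ℝ)) :
    ∫ ω, (1 / 2 : ℝ) * dotProduct (Δ₁ ω) (H₁.mulVec (Δ₁ ω)) ∂μ₁
      ≤ ∫ ω, (1 / 2 : ℝ) * dotProduct (Δ₂ ω) (H₂.mulVec (Δ₂ ω)) ∂μ₂ := by
  rw [integral_const_mul, integral_const_mul,
    integral_dotProduct_mulVec_self_of_secondMoment_eq_smul_one H₁ Δ₁ hint₁ hmom₁,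
    integral_dotProduct_mulVec_self_of_secondMoment_eq_smul_one H₂ Δ₂ hint₂ hmom₂]
  calc 1 / 2 * (σ ^ 2 / d₁ * H₁.trace)
      = σ ^ 2 / 2 * (1 / d₁ * H₁.trace) := by ring
    _ ≤ σ ^ 2 / 2 * (1 / d₂ * H₂.trace) := by gcongr
    _ = 1 / 2 * (σ ^ 2 / d₂ * H₂.trace) := by ring

/-- Layers with smaller average Hessian trace are less sensitive to isotropic
random perturbations of the same expected magnitude (HAWQ-V2 Lemma). -/
theorem dhf_stmt1 {Ω₁ Ω₂ : Type*} [MeasurableSpace Ω₁] [MeasurableSpace Ω₂]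
    {μ₁ : Measure Ω₁} {μ₂ : Measure Ω₂}
    [IsProbabilityMeasure μ₁] [IsProbabilityMeasure μ₂]
    {d₁ d₂ : ℕ} (hd₁ : 0 < d₁) (hd₂ : 0 < d₂)
    (H₁ : Matrix (Fin d₁) (Fin d₁) ℝ) (H₂ : Matrix (Fin d₂) (Fin d₂) ℝ)
    (hH₁ : H₁.IsHermitian) (hH₂ : H₂.IsHermitian)
    (htr : (1 / (d₁ : ℝ)) * H₁.trace ≤ (1 / (d₂ : ℝ)) * H₂.trace)
    (Δ₁ : Ω₁ → Fin d₁ → ℝ) (Δ₂ : Ω₂ → Fin d₂ → ℝ) (σ : ℝ) (hσ : 0 ≤ σ)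
    (hint₁ : ∀ i j, Integrable (fun ω => Δ₁ ω i * Δ₁ ω j) μ₁)
    (hint₂ : ∀ i j, Integrable (fun ω => Δ₂ ω i * Δ₂ ω j) μ₂)
    (hmom₁ : (Matrix.of fun i j => ∫ ω, Δ₁ ω i * Δ₁ ω j ∂μ₁)
      = (σ ^ 2 / (d₁ : ℝ)) • (1 : Matrix (Fin d₁) (Fin d₁) ℝ))
    (hmom₂ : (Matrix.of fun i j => ∫ ω, Δ₂ ω i * Δ₂ ω j ∂μ₂)
      = (σ ^ 2 / (d₂ : ℝ)) • (1 : Matrix (Fin d₂) (Fin d₂) ℝ)) :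
    ∫ ω, (1 / 2 : ℝ) * dotProduct (Δ₁ ω) (H₁.mulVec (Δ₁ ω)) ∂μ₁
      ≤ ∫ ω, (1 / 2 : ℝ) * dotProduct (Δ₂ ω) (H₂.mulVec (Δ₂ ω)) ∂μ₂ :=
  dhf_stmt1_general H₁ H₂ htr Δ₁ Δ₂ σ hint₁ hint₂ hmom₁ hmom₂
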